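/- arXiv:1612.00303 — 8 statements merged into one kernel-verified Lean document; each statement's English description precedes it below -/
import Mathlib

section
/- Let P, Q, R be double quasi-posets and let PQ be their join-product (disjoint union for ≤₁; concatenation for ≤₂, with every element of P below every element of Q). If f is a prepicture between PQ and R, then the image f(V(Q)) is a preopen set of R. -/
def strictOf {α : Type*} (r : α → α → Prop) (i j : α) : Prop := r i j ∧ ¬ r j i

def IsPrepicture {α β : Type*} (p1 p2 : α → α → Prop) (q1 q2 : β → β → Prop) (f : α ≃ β) : Prop :=
  (∀ i j, strictOf p1 i j → strictOf q2 (f i) (f j)) ∧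
  (∀ i j, strictOf q1 (f i) (f j) → strictOf p2 i j)

/-- The first preorder of the join-product `PQ`: disjoint union. -/
def joinLe1 {α β : Type*} (p : α → α → Prop) (q : β → β → Prop) : α ⊕ β → α ⊕ β → Prop
  | Sum.inl a, Sum.inl b => p a b
  | Sum.inr a, Sum.inr b => q a b
  | _, _ => False

/-- The second preorder of the join-product `PQ`: every element of `P` below every
element of `Q`. -/
def joinLe2 {α β : Type*} (p : α → α → Prop) (q : β → β → Prop) : α ⊕ β → α ⊕ β → Prop
  | Sum.inl a, Sum.inl b => p a b
  | Sum.inr a, Sum.inr b => q a b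
  | Sum.inl _, Sum.inr _ => True
  | Sum.inr _, Sum.inl _ => False

def IsPreopenSet {α : Type*} (r : α → α → Prop) (O : Set α) : Prop :=
  ∀ i j, strictOf r i j → i ∈ O → j ∈ O

/-- If `f` is a prepicture between `PQ` and `R`, then `f(V(Q))` is a preopen set of `R`. -/
theorem stmt7 {α β γ : Type*} [Finite α] [Finite β] [Finite γ]
    (p1 p2 : α → α → Prop) (q1 q2 : β → β → Prop) (r1 r2 : γ → γ → Prop)
    (f : α ⊕ β ≃ γ)
    (hf : IsPrepicture (joinLe1 p1 q1) (joinLe2 p2 q2) r1 r2 f) :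
    IsPreopenSet r1 {x : γ | ∃ b : β, f (Sum.inr b) = x} := by
  rintro i j hij ⟨b, rfl⟩
  rcases h : f.symm j with a | b'
  · exfalso
    have hj : j = f (Sum.inl a) := by rw [← h, Equiv.apply_symm_apply]
    rw [hj] at hij
    have := hf.2 _ _ hij
    exact this.1
  · exact ⟨b', by rw [← h, Equiv.apply_symm_apply]⟩
end

section
/- Let P, Q, R be double quasi-posets and PQ their join-product. If f is a picture between PQ and R, then f(V(Q)) is an open set of R. -/
def IsPicture {α β : Type*} (p1 p2 : α → α → Prop) (q1 q2 : β → β → Prop) (f : α ≃ β) : Prop :=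
  (∀ i j, p1 i j → q2 (f i) (f j)) ∧
  (∀ i j, strictOf p1 i j → strictOf q2 (f i) (f j)) ∧
  (∀ i j, q1 (f i) (f j) → p2 i j) ∧
  (∀ i j, strictOf q1 (f i) (f j) → strictOf p2 i j)

def IsOpenSet {α : Type*} (r : α → α → Prop) (O : Set α) : Prop :=
  ∀ i j, r i j → i ∈ O → j ∈ O

/-- If `f` is a picture between `PQ` and `R`, then `f(V(Q))` is an open set of `R`. -/
theorem stmt8 {α β γ : Type*} [Finite α] [Finite β] [Finite γ]
    (p1 p2 : α → α → Prop) (q1 q2 : β → β → Prop) (r1 r2 : γ → γ → Prop)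
    (f : α ⊕ β ≃ γ)
    (hf : IsPicture (joinLe1 p1 q1) (joinLe2 p2 q2) r1 r2 f) :
    IsOpenSet r1 {x : γ | ∃ b : β, f (Sum.inr b) = x} := by
  intro i j hr hi
  obtain ⟨b, hb⟩ := hi
  have hr' : r1 (f (Sum.inr b)) (f (f.symm j)) := by
    rw [hb, f.apply_symm_apply]; exact hr
  have h2 := hf.2.2.1 _ _ hr'
  cases h : f.symm j with
  | inl a => rw [h] at h2; exact absurd h2 (by simp [joinLe2])
  | inr b' => exact ⟨b', by rw [← h, f.apply_symm_apply]⟩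
end

section
/- The number of prepictures between PQ and R equals the sum over all preopen sets O of R of the product of the number of prepictures between P and R restricted to the complement of O, and the number of prepictures between Q and R restricted to O. (Hopf pairing compatibility: ⟨PQ, R⟩_< = ⟨P⊗Q, Δ_<(R)⟩_<.) -/
open Classical

def Equiv.subtypeSigmaEquivSigmaSubtype {ι : Type*} {β : ι → Type*} (Q : (Σ i, β i) → Prop) :
    {s : Σ i, β i // Q s} ≃ Σ i, {b : β i // Q ⟨i, b⟩} where
  toFun s := ⟨s.1.1, s.1.2, s.2⟩
  invFun s := ⟨⟨s.1, s.2.1⟩, s.2.2⟩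
  left_inv _ := rfl
  right_inv _ := rfl

namespace Prepicture

variable {α β γ : Type*}

noncomputable def glue (O : Finset γ) (g : α ≃ {x // x ∉ O}) (h : β ≃ {x // x ∈ O}) : α ⊕ β ≃ γ :=
  (Equiv.sumComm α β).trans ((Equiv.sumCongr h g).trans (Equiv.sumCompl (· ∈ O)))

section glue

variable {O : Finset γ} {g : α ≃ {x // x ∉ O}} {h : β ≃ {x // x ∈ O}}

@[simp] lemma glue_inl (a : α) : glue O g h (Sum.inl a) = g a := rfl

@[simp] lemma glue_inr (b : β) : glue O g h (Sum.inr b) = h b := rfl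

lemma mem_iff_exists_glue_inr (c : γ) : c ∈ O ↔ ∃ b, glue O g h (Sum.inr b) = c :=
  ⟨fun hc => ⟨h.symm ⟨c, hc⟩, by simp⟩, by rintro ⟨b, rfl⟩; exact (h b).2⟩

lemma isPrepicture_glue_iff (p1 p2 : α → α → Prop) (q1 q2 : β → β → Prop)
    (r1 r2 : γ → γ → Prop) :
    IsPrepicture (joinLe1 p1 q1) (joinLe2 p2 q2) r1 r2 (glue O g h) ↔
      IsPreopenSet r1 (O : Set γ) ∧
      IsPrepicture p1 p2 (fun x y => r1 x.1 y.1) (fun x y => r2 x.1 y.1) g ∧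
      IsPrepicture q1 q2 (fun x y => r1 x.1 y.1) (fun x y => r2 x.1 y.1) h := by
  constructor
  · rintro ⟨hlt, hgt⟩
    refine ⟨?_, ⟨fun a a' => hlt (.inl a) (.inl a'), fun a a' => hgt (.inl a) (.inl a')⟩,
      ⟨fun b b' => hlt (.inr b) (.inr b'), fun b b' => hgt (.inr b) (.inr b')⟩⟩
    intro i j hij hi
    by_contra hj
    obtain ⟨b, rfl⟩ : ∃ b, (h b).1 = i := ⟨h.symm ⟨i, hi⟩, by simp⟩
    obtain ⟨a, rfl⟩ : ∃ a, (g a).1 = j := ⟨g.symm ⟨j, hj⟩, by simp⟩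
    exact (hgt (.inr b) (.inl a) hij).1
  · rintro ⟨hO, hg, hh⟩
    constructor
    · rintro (a | b) (a' | b') hlt
      · exact hg.1 a a' hlt
      · exact hlt.1.elim
      · exact hlt.1.elim
      · exact hh.1 b b' hlt
    · rintro (a | b) (a' | b') hgt
      · exact hg.2 a a' hgt
      · exact ⟨trivial, id⟩
      · exact ((g a').2 (hO _ _ hgt (h b).2)).elim
      · exact hh.2 b b' hgt

end glue

lemma glue_bijective [Fintype γ] :
    Function.Bijective fun s : Σ O : Finset γ, (α ≃ {x // x ∉ O}) × (β ≃ {x // x ∈ O}) =>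
      glue s.1 s.2.1 s.2.2 := by
  constructor
  · rintro ⟨O, g, h⟩ ⟨O', g', h'⟩ heq
    obtain rfl : O = O' := Finset.ext fun c => by
      rw [mem_iff_exists_glue_inr, mem_iff_exists_glue_inr,
        show glue O g h = glue O' g' h' from heq]
    obtain rfl : g = g' := Equiv.ext fun a => Subtype.ext (congrArg (· (Sum.inl a)) heq)
    obtain rfl : h = h' := Equiv.ext fun b => Subtype.ext (congrArg (· (Sum.inr b)) heq)
    rfl
  · intro f
    let O := Finset.univ.filter fun c => (f.symm c).isRight
    refine ⟨⟨O, Equiv.sumIsLeft.symm.trans (f.subtypeEquiv fun x => by simp [O]),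
      Equiv.sumIsRight.symm.trans (f.subtypeEquiv fun x => by simp [O])⟩, ?_⟩
    ext (a | b) <;> rfl

lemma card_isPrepicture_glue (O : Finset γ) (p1 p2 : α → α → Prop) (q1 q2 : β → β → Prop)
    (r1 r2 : γ → γ → Prop) :
    Nat.card {gh : (α ≃ {x // x ∉ O}) × (β ≃ {x // x ∈ O}) //
        IsPrepicture (joinLe1 p1 q1) (joinLe2 p2 q2) r1 r2 (glue O gh.1 gh.2)} =
      if IsPreopenSet r1 (O : Set γ) then
        Nat.card {g : α ≃ {x // x ∉ O} //
            IsPrepicture p1 p2 (fun x y => r1 x.1 y.1) (fun x y => r2 x.1 y.1) g} *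
          Nat.card {h : β ≃ {x // x ∈ O} //
            IsPrepicture q1 q2 (fun x y => r1 x.1 y.1) (fun x y => r2 x.1 y.1) h}
      else 0 := by
  simp_rw [isPrepicture_glue_iff]
  split_ifs with hO
  · simp only [hO, true_and]
    rw [Nat.card_congr Equiv.subtypeProdEquivProd, Nat.card_prod]
  · simp [hO]

end Prepicture

theorem stmt9_general {α β γ : Type*} [Fintype γ]
    (p1 p2 : α → α → Prop) (q1 q2 : β → β → Prop) (r1 r2 : γ → γ → Prop) :
    Nat.card {f : α ⊕ β ≃ γ // IsPrepicture (joinLe1 p1 q1) (joinLe2 p2 q2) r1 r2 f}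
      = ∑ O : Finset γ,
          if IsPreopenSet r1 (↑O : Set γ) then
            Nat.card {g : α ≃ {x : γ // x ∉ O} //
                IsPrepicture p1 p2 (fun x y => r1 x.1 y.1) (fun x y => r2 x.1 y.1) g}
            * Nat.card {h : β ≃ {x : γ // x ∈ O} //
                IsPrepicture q1 q2 (fun x y => r1 x.1 y.1) (fun x y => r2 x.1 y.1) h}
          else 0 := by
  rw [← Nat.card_congr <|
      (Equiv.ofBijective _ Prepicture.glue_bijective).subtypeEquiv fun _ => Iff.rfl,
    Nat.card_congr (Equiv.subtypeSigmaEquivSigmaSubtype _), Nat.card_sigma]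
  exact Finset.sum_congr rfl fun O _ => Prepicture.card_isPrepicture_glue O p1 p2 q1 q2 r1 r2

/-- `⟨PQ, R⟩_< = ⟨P ⊗ Q, Δ_<(R)⟩_<`: the number of prepictures between `PQ` and `R`
is the sum, over preopen sets `O` of `R`, of the number of prepictures between `P`
and `R|_{Oᶜ}` times the number of prepictures between `Q` and `R|_O`. -/
theorem stmt9 {α β γ : Type*} [Fintype α] [Fintype β] [Fintype γ]
    (p1 p2 : α → α → Prop) (q1 q2 : β → β → Prop) (r1 r2 : γ → γ → Prop) :
    Nat.card {f : α ⊕ β ≃ γ // IsPrepicture (joinLe1 p1 q1) (joinLe2 p2 q2) r1 r2 f}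
      = ∑ O : Finset γ,
          if IsPreopenSet r1 (↑O : Set γ) then
            Nat.card {g : α ≃ {x : γ // x ∉ O} //
                IsPrepicture p1 p2 (fun x y => r1 x.1 y.1) (fun x y => r2 x.1 y.1) g}
            * Nat.card {h : β ≃ {x : γ // x ∈ O} //
                IsPrepicture q1 q2 (fun x y => r1 x.1 y.1) (fun x y => r2 x.1 y.1) h}
          else 0 :=
  stmt9_general p1 p2 q1 q2 r1 r2
end

section
/- The number of pictures between PQ and R equals the sum over all open sets O of R of the product of the number of pictures between P and R|_{O^c} and the number of pictures between Q and R|_O. -/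
open Classical

/-!
A picture `f` between `PQ` and `R` is determined by the set `O = f(Q)` together with the two
restrictions `P → R|_{Oᶜ}` and `Q → R|_O`, and each restriction is again a picture. Conversely two
such pictures glue to a picture of `PQ` exactly when `O` is open: the conditions on pairs lying in
different factors hold automatically, except that `f q ≤₁ f p` would force `q ≤₂ p`, which never
holds in `PQ`; so no element of `O` may lie `≤₁`-below an element of `Oᶜ`.
-/

section SumCongrCompl

variable {α β γ : Type*} (O : Set γ) [DecidablePred (· ∈ O)]

def sumCongrCompl (g : α ≃ {x // x ∉ O}) (h : β ≃ {x // x ∈ O}) : α ⊕ β ≃ γ :=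
  (g.sumCongr h).trans ((Equiv.sumComm _ _).trans (Equiv.sumCompl (· ∈ O)))

@[simp]
theorem sumCongrCompl_inl (g : α ≃ {x // x ∉ O}) (h : β ≃ {x // x ∈ O}) (a : α) :
    sumCongrCompl O g h (Sum.inl a) = g a := rfl

@[simp]
theorem sumCongrCompl_inr (g : α ≃ {x // x ∉ O}) (h : β ≃ {x // x ∈ O}) (b : β) :
    sumCongrCompl O g h (Sum.inr b) = h b := rfl

theorem sumCongrCompl_mem_iff (g : α ≃ {x // x ∉ O}) (h : β ≃ {x // x ∈ O}) (x : α ⊕ β) :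
    sumCongrCompl O g h x ∈ O ↔ x.isRight := by
  rcases x with a | b
  · simp [(g a).2]
  · simp [(h b).2]

def sumCongrComplEquiv :
    (α ≃ {x // x ∉ O}) × (β ≃ {x // x ∈ O}) ≃ {f : α ⊕ β ≃ γ // ∀ x, f x ∈ O ↔ x.isRight} where
  toFun gh := ⟨sumCongrCompl O gh.1 gh.2, sumCongrCompl_mem_iff O gh.1 gh.2⟩
  invFun f :=
    (Equiv.sumIsLeft.symm.trans (f.1.subtypeEquiv fun x => by simp [f.2 x]),
     Equiv.sumIsRight.symm.trans (f.1.subtypeEquiv fun x => (f.2 x).symm))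
  left_inv gh := by ext <;> rfl
  right_inv f := by ext (a | b) <;> rfl

end SumCongrCompl

section JoinProduct

variable {α β γ : Type*} (p1 p2 : α → α → Prop) (q1 q2 : β → β → Prop) (r1 r2 : γ → γ → Prop)

theorem isPicture_sumCongrCompl_iff (O : Set γ) [DecidablePred (· ∈ O)]
    (g : α ≃ {x // x ∉ O}) (h : β ≃ {x // x ∈ O}) :
    IsPicture (joinLe1 p1 q1) (joinLe2 p2 q2) r1 r2 (sumCongrCompl O g h) ↔
      IsOpenSet r1 O ∧
      IsPicture p1 p2 (fun x y => r1 x.1 y.1) (fun x y => r2 x.1 y.1) g ∧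
      IsPicture q1 q2 (fun x y => r1 x.1 y.1) (fun x y => r2 x.1 y.1) h := by
  constructor
  · rintro ⟨hf1, hf2, hf3, hf4⟩
    refine ⟨fun i j hij hi => ?_,
      ⟨fun i j => hf1 (.inl i) (.inl j), fun i j => hf2 (.inl i) (.inl j),
      fun i j => hf3 (.inl i) (.inl j), fun i j => hf4 (.inl i) (.inl j)⟩,
      ⟨fun i j => hf1 (.inr i) (.inr j), fun i j => hf2 (.inr i) (.inr j),
      fun i j => hf3 (.inr i) (.inr j), fun i j => hf4 (.inr i) (.inr j)⟩⟩
    by_contra hj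
    simpa [joinLe2] using hf3 (.inr (h.symm ⟨i, hi⟩)) (.inl (g.symm ⟨j, hj⟩)) (by simpa using hij)
  · rintro ⟨hO, ⟨hg1, hg2, hg3, hg4⟩, ⟨hh1, hh2, hh3, hh4⟩⟩
    have hOh : ∀ b a, ¬ r1 (h b) (g a) := fun b a hba => (g a).2 (hO _ _ hba (h b).2)
    refine ⟨?_, ?_, ?_, ?_⟩
    · rintro (i | i) (j | j) hij
      exacts [hg1 i j hij, hij.elim, hij.elim, hh1 i j hij]
    · rintro (i | i) (j | j) hij
      exacts [hg2 i j hij, hij.1.elim, hij.1.elim, hh2 i j hij]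
    · rintro (i | i) (j | j) hij
      exacts [hg3 i j hij, trivial, (hOh i j hij).elim, hh3 i j hij]
    · rintro (i | i) (j | j) hij
      exacts [hg4 i j hij, ⟨trivial, id⟩, (hOh i j hij.1).elim, hh4 i j hij]

theorem natCard_isPicture_join_fiber (O : Set γ) [DecidablePred (· ∈ O)] :
    Nat.card {f : α ⊕ β ≃ γ // (∀ x, f x ∈ O ↔ x.isRight) ∧
        IsPicture (joinLe1 p1 q1) (joinLe2 p2 q2) r1 r2 f} =
      if IsOpenSet r1 O then
        Nat.card {g : α ≃ {x // x ∉ O} //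
            IsPicture p1 p2 (fun x y => r1 x.1 y.1) (fun x y => r2 x.1 y.1) g} *
        Nat.card {h : β ≃ {x // x ∈ O} //
            IsPicture q1 q2 (fun x y => r1 x.1 y.1) (fun x y => r2 x.1 y.1) h}
      else 0 := by
  have e := (sumCongrComplEquiv O).subtypeEquiv
    (q := fun f => IsPicture (joinLe1 p1 q1) (joinLe2 p2 q2) r1 r2 f.1) fun gh =>
      (isPicture_sumCongrCompl_iff p1 p2 q1 q2 r1 r2 O gh.1 gh.2).symm
  rw [Nat.card_congr ((Equiv.subtypeSubtypeEquivSubtypeInter _ _).symm.trans e.symm)]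
  split_ifs with hO
  · simp only [hO, true_and]
    rw [← Nat.card_prod]
    exact Nat.card_congr Equiv.subtypeProdEquivProd
  · simp [hO]

end JoinProduct

theorem Finset.filter_isRight_symm_eq_iff {α β γ : Type*} [Fintype γ] (f : α ⊕ β ≃ γ)
    (O : Finset γ) :
    Finset.univ.filter (fun c => (f.symm c).isRight) = O ↔ ∀ x, f x ∈ O ↔ x.isRight := by
  rw [Finset.ext_iff, ← f.forall_congr_right]
  simp [Iff.comm]

theorem natCard_sumEquiv_eq_sum_fiber {α β γ : Type*} [Fintype γ] (P : (α ⊕ β ≃ γ) → Prop) :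
    Nat.card {f // P f} =
      ∑ O : Finset γ, Nat.card {f : α ⊕ β ≃ γ // (∀ x, f x ∈ O ↔ x.isRight) ∧ P f} := by
  rw [← Nat.card_sigma]
  let rightImage (f : α ⊕ β ≃ γ) : Finset γ := Finset.univ.filter fun c => (f.symm c).isRight
  refine Nat.card_congr <| (Equiv.sigmaFiberEquiv fun f : {f // P f} => rightImage f.1).symm.trans
    (Equiv.sigmaCongrRight fun O =>
      (Equiv.subtypeSubtypeEquivSubtypeInter P (rightImage · = O)).trans
        (Equiv.subtypeEquivRight fun f => ?_))
  rw [Finset.filter_isRight_symm_eq_iff, and_comm]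

theorem stmt10_general {α β γ : Type*} [Fintype γ]
    (p1 p2 : α → α → Prop) (q1 q2 : β → β → Prop) (r1 r2 : γ → γ → Prop) :
    Nat.card {f : α ⊕ β ≃ γ // IsPicture (joinLe1 p1 q1) (joinLe2 p2 q2) r1 r2 f}
      = ∑ O : Finset γ,
          if IsOpenSet r1 (↑O : Set γ) then
            Nat.card {g : α ≃ {x : γ // x ∉ O} //
                IsPicture p1 p2 (fun x y => r1 x.1 y.1) (fun x y => r2 x.1 y.1) g}
            * Nat.card {h : β ≃ {x : γ // x ∈ O} //
                IsPicture q1 q2 (fun x y => r1 x.1 y.1) (fun x y => r2 x.1 y.1) h}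
          else 0 := by
  rw [natCard_sumEquiv_eq_sum_fiber]
  exact Finset.sum_congr rfl fun O _ => natCard_isPicture_join_fiber p1 p2 q1 q2 r1 r2 (O : Set γ)

/-- `⟨PQ, R⟩ = ⟨P ⊗ Q, Δ(R)⟩`: the number of pictures between `PQ` and `R`
is the sum, over open sets `O` of `R`, of the number of pictures between `P`
and `R|_{Oᶜ}` times the number of pictures between `Q` and `R|_O`. -/
theorem stmt10 {α β γ : Type*} [Fintype α] [Fintype β] [Fintype γ]
    (p1 p2 : α → α → Prop) (q1 q2 : β → β → Prop) (r1 r2 : γ → γ → Prop) :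
    Nat.card {f : α ⊕ β ≃ γ // IsPicture (joinLe1 p1 q1) (joinLe2 p2 q2) r1 r2 f}
      = ∑ O : Finset γ,
          if IsOpenSet r1 (↑O : Set γ) then
            Nat.card {g : α ≃ {x : γ // x ∉ O} //
                IsPicture p1 p2 (fun x y => r1 x.1 y.1) (fun x y => r2 x.1 y.1) g}
            * Nat.card {h : β ≃ {x : γ // x ∈ O} //
                IsPicture q1 q2 (fun x y => r1 x.1 y.1) (fun x y => r2 x.1 y.1) h}
          else 0 :=
  stmt10_general p1 p2 q1 q2 r1 r2
end

section
/- If f is a picture between double quasi-posets P and Q and moreover x_P = y_Q and x_Q = y_P (with x, y as counts of pairs related by ≤₁ and ≤₂ respectively), then f is an isomorphism from P to ι(Q), where ι(Q) is Q with the two preorders exchanged; i.e., i ≤₁ j in P ⟺ f(i) ≤₂ f(j) in Q and i ≤₂ j in P ⟺ f(i) ≤₁ f(j) in Q. -/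
/-- If `f` is a picture between `P` and `Q` with `x_P = y_Q` and `x_Q = y_P`,
then `f` is an isomorphism from `P` to `ι(Q)`. -/
theorem stmt12 {α β : Type*} [Fintype α] [Fintype β]
    (p1 p2 : α → α → Prop) (q1 q2 : β → β → Prop)
    (f : α ≃ β) (hf : IsPicture p1 p2 q1 q2 f)
    (hxy : Nat.card {ij : α × α // p1 ij.1 ij.2} = Nat.card {ij : β × β // q2 ij.1 ij.2})
    (hyx : Nat.card {ij : β × β // q1 ij.1 ij.2} = Nat.card {ij : α × α // p2 ij.1 ij.2}) :
    ∀ i j : α, (p1 i j ↔ q2 (f i) (f j)) ∧ (p2 i j ↔ q1 (f i) (f j)) := by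
  obtain ⟨h1, -, h3, -⟩ := hf
  -- map from p1-pairs to q2-pairs
  set g : {ij : α × α // p1 ij.1 ij.2} → {ij : β × β // q2 ij.1 ij.2} :=
    fun x => ⟨(f x.1.1, f x.1.2), h1 _ _ x.2⟩ with hg
  have hginj : Function.Injective g := by
    rintro ⟨⟨a, b⟩, _⟩ ⟨⟨c, d⟩, _⟩ h
    simp only [hg, Subtype.mk.injEq, Prod.mk.injEq, f.injective.eq_iff] at h
    simp [h.1, h.2]
  have hgsurj : Function.Surjective g :=
    ((Nat.bijective_iff_injective_and_card g).2 ⟨hginj, hxy⟩).2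
  -- map from q1-pairs to p2-pairs
  set g' : {ij : β × β // q1 ij.1 ij.2} → {ij : α × α // p2 ij.1 ij.2} :=
    fun x => ⟨(f.symm x.1.1, f.symm x.1.2), h3 _ _ (by simpa using x.2)⟩ with hg'
  have hg'inj : Function.Injective g' := by
    rintro ⟨⟨a, b⟩, _⟩ ⟨⟨c, d⟩, _⟩ h
    simp only [hg', Subtype.mk.injEq, Prod.mk.injEq, f.symm.injective.eq_iff] at h
    simp [h.1, h.2]
  have hg'surj : Function.Surjective g' :=
    ((Nat.bijective_iff_injective_and_card g').2 ⟨hg'inj, hyx⟩).2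
  intro i j
  constructor
  · constructor
    · exact h1 i j
    · intro h
      obtain ⟨⟨⟨a, b⟩, hab⟩, he⟩ := hgsurj ⟨(f i, f j), h⟩
      simp only [hg, Subtype.mk.injEq, Prod.mk.injEq, f.injective.eq_iff] at he
      rwa [← he.1, ← he.2]
  · constructor
    · intro h
      obtain ⟨⟨⟨a, b⟩, hab⟩, he⟩ := hg'surj ⟨(i, j), h⟩
      simp only [hg', Subtype.mk.injEq, Prod.mk.injEq, f.symm.injective.eq_iff] at he
      have : a = f i ∧ b = f j :=
        ⟨(f.symm_apply_eq.mp he.1), (f.symm_apply_eq.mp he.2)⟩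
      rwa [← this.1, ← this.2]
    · exact fun h => h3 i j h
end

section
/- The product ⊴ on double quasi-posets defined by P ⊴ Q = Σ_{f ∈ I(P,Q)} P ×_f Q (in the free vector space on isomorphism classes) is associative: (P ⊴ Q) ⊴ R = P ⊴ (Q ⊴ R). Concretely: there is a bijection between the set of pairs {(f,g) : f ∈ I(P,Q), g ∈ I(P ×_f Q, R)} and {(f',g') : f' ∈ I(Q,R), g' ∈ I(P, Q ×_{f'} R)}, given by (f,g) ↦ (g ∘ f⁻¹, f), which moreover satisfies (P ×_f Q) ×_g R = P ×_{f} (Q ×_{g∘f⁻¹} R) as double quasi-posets. -/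
/-- A semi-picture `f ∈ I(P,Q)`: `i ≤₁ j ⟹ f(i) ≤₂ f(j)` and `i <₁ j ⟹ f(i) <₂ f(j)`. -/
def IsSemiPicture {α β : Type*} (p1 p2 : α → α → Prop) (q1 q2 : β → β → Prop) (f : α ≃ β) :
    Prop :=
  (∀ i j, p1 i j → q2 (f i) (f j)) ∧
  (∀ i j, strictOf p1 i j → strictOf q2 (f i) (f j))

/-- Associativity of `⊴`: the map `(f, g) ↦ (g ∘ f⁻¹, f)` is a bijection from
`{(f,g) : f ∈ I(P,Q), g ∈ I(P ×_f Q, R)}` to `{(f',g') : f' ∈ I(Q,R), g' ∈ I(P, Q ×_{f'} R)}`,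
and `(P ×_f Q) ×_g R = P ×_f (Q ×_{g∘f⁻¹} R)` (the second preorders being `p2` on both
sides, it suffices to identify the first preorders). -/
theorem stmt15 {α β γ : Type*} [Finite α] [Finite β] [Finite γ]
    (p1 p2 : α → α → Prop) (q1 q2 : β → β → Prop) (r1 r2 : γ → γ → Prop) :
    Set.BijOn (fun fg : (α ≃ β) × (α ≃ γ) => ((fg.1.symm.trans fg.2, fg.1) : (β ≃ γ) × (α ≃ β)))
      {fg : (α ≃ β) × (α ≃ γ) | IsSemiPicture p1 p2 q1 q2 fg.1 ∧
        IsSemiPicture (fun i j => q1 (fg.1 i) (fg.1 j)) p2 r1 r2 fg.2}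
      {fg : (β ≃ γ) × (α ≃ β) | IsSemiPicture q1 q2 r1 r2 fg.1 ∧
        IsSemiPicture p1 p2 (fun i j => r1 (fg.1 i) (fg.1 j)) q2 fg.2} ∧
    (∀ fg : (α ≃ β) × (α ≃ γ), ∀ i j : α,
      r1 (fg.2 i) (fg.2 j) ↔
        r1 ((fg.1.symm.trans fg.2) (fg.1 i)) ((fg.1.symm.trans fg.2) (fg.1 j))) := by
  constructor
  · refine ⟨?_, ?_, ?_⟩
    · rintro ⟨f, g⟩ ⟨⟨hf1, hf2⟩, ⟨hg1, hg2⟩⟩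
      refine ⟨⟨?_, ?_⟩, hf1, hf2⟩
      · intro i j h
        simpa using hg1 (f.symm i) (f.symm j) (by simpa using h)
      · intro i j h
        simpa [strictOf] using hg2 (f.symm i) (f.symm j) (by simpa [strictOf] using h)
    · rintro ⟨f, g⟩ - ⟨f', g'⟩ - h
      simp only [Prod.mk.injEq] at h
      obtain ⟨h1, h2⟩ := h
      subst h2
      have : g = g' := by
        ext x
        have := congrArg (fun e : β ≃ γ => e (f x)) h1
        simpa using this
      simp [this]
    · rintro ⟨f', g'⟩ ⟨⟨hf1, hf2⟩, ⟨hg1, hg2⟩⟩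
      refine ⟨(g', g'.trans f'), ⟨⟨hg1, hg2⟩, ?_, ?_⟩, ?_⟩
      · intro i j h
        exact hf1 _ _ h
      · intro i j h
        exact hf2 _ _ h
      · refine Prod.ext ?_ rfl
        ext x
        simp
  · intro fg i j
    simp
end

section
/- There is a bijection between {(f,g) : f ∈ I_<(P,Q), g ∈ I_<(P ×_f Q, R)} and {(f',g') : f' ∈ I_<(Q,R), g' ∈ I_<(P, Q ×_{f'} R)} given by (f,g) ↦ (g ∘ f⁻¹, f) with inverse (f',g') ↦ (g', f' ∘ g'); hence the product ⊲ defined by P ⊲ Q = Σ_{f ∈ I_<(P,Q)} P ×_f Q is associative. -/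
/-- A semi-prepicture `f ∈ I_<(P,Q)`: `i <₁ j ⟹ f(i) <₂ f(j)`. -/
def IsSemiPrepicture {α β : Type*} (p1 p2 : α → α → Prop) (q1 q2 : β → β → Prop) (f : α ≃ β) :
    Prop :=
  ∀ i j, strictOf p1 i j → strictOf q2 (f i) (f j)

/-- Associativity of `⊲`: the map `(f, g) ↦ (g ∘ f⁻¹, f)` is a bijection from
`{(f,g) : f ∈ I_<(P,Q), g ∈ I_<(P ×_f Q, R)}` to
`{(f',g') : f' ∈ I_<(Q,R), g' ∈ I_<(P, Q ×_{f'} R)}`, with inverse `(f',g') ↦ (g', f' ∘ g')`. -/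
theorem stmt16 {α β γ : Type*} [Finite α] [Finite β] [Finite γ]
    (p1 p2 : α → α → Prop) (q1 q2 : β → β → Prop) (r1 r2 : γ → γ → Prop) :
    Set.BijOn (fun fg : (α ≃ β) × (α ≃ γ) => ((fg.1.symm.trans fg.2, fg.1) : (β ≃ γ) × (α ≃ β)))
      {fg : (α ≃ β) × (α ≃ γ) | IsSemiPrepicture p1 p2 q1 q2 fg.1 ∧
        IsSemiPrepicture (fun i j => q1 (fg.1 i) (fg.1 j)) p2 r1 r2 fg.2}
      {fg : (β ≃ γ) × (α ≃ β) | IsSemiPrepicture q1 q2 r1 r2 fg.1 ∧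
        IsSemiPrepicture p1 p2 (fun i j => r1 (fg.1 i) (fg.1 j)) q2 fg.2} ∧
    Set.InvOn (fun fg : (β ≃ γ) × (α ≃ β) => ((fg.2, fg.2.trans fg.1) : (α ≃ β) × (α ≃ γ)))
      (fun fg : (α ≃ β) × (α ≃ γ) => ((fg.1.symm.trans fg.2, fg.1) : (β ≃ γ) × (α ≃ β)))
      {fg : (α ≃ β) × (α ≃ γ) | IsSemiPrepicture p1 p2 q1 q2 fg.1 ∧
        IsSemiPrepicture (fun i j => q1 (fg.1 i) (fg.1 j)) p2 r1 r2 fg.2}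
      {fg : (β ≃ γ) × (α ≃ β) | IsSemiPrepicture q1 q2 r1 r2 fg.1 ∧
        IsSemiPrepicture p1 p2 (fun i j => r1 (fg.1 i) (fg.1 j)) q2 fg.2} := by

  have hmt : Set.MapsTo (fun fg : (α ≃ β) × (α ≃ γ) => ((fg.1.symm.trans fg.2, fg.1) : (β ≃ γ) × (α ≃ β)))
      {fg : (α ≃ β) × (α ≃ γ) | IsSemiPrepicture p1 p2 q1 q2 fg.1 ∧
        IsSemiPrepicture (fun i j => q1 (fg.1 i) (fg.1 j)) p2 r1 r2 fg.2}
      {fg : (β ≃ γ) × (α ≃ β) | IsSemiPrepicture q1 q2 r1 r2 fg.1 ∧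
        IsSemiPrepicture p1 p2 (fun i j => r1 (fg.1 i) (fg.1 j)) q2 fg.2} := by
    rintro ⟨f, g⟩ ⟨hf, hg⟩
    refine ⟨fun i j h => ?_, hf⟩
    have := hg (f.symm i) (f.symm j)
    simp only [strictOf, Equiv.apply_symm_apply] at this
    exact this h
  have hmt' : Set.MapsTo (fun fg : (β ≃ γ) × (α ≃ β) => ((fg.2, fg.2.trans fg.1) : (α ≃ β) × (α ≃ γ)))
      {fg : (β ≃ γ) × (α ≃ β) | IsSemiPrepicture q1 q2 r1 r2 fg.1 ∧
        IsSemiPrepicture p1 p2 (fun i j => r1 (fg.1 i) (fg.1 j)) q2 fg.2}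
      {fg : (α ≃ β) × (α ≃ γ) | IsSemiPrepicture p1 p2 q1 q2 fg.1 ∧
        IsSemiPrepicture (fun i j => q1 (fg.1 i) (fg.1 j)) p2 r1 r2 fg.2} := by
    rintro ⟨f', g'⟩ ⟨hf', hg'⟩
    exact ⟨hg', fun i j h => hf' (g' i) (g' j) h⟩
  have hinv : Set.InvOn (fun fg : (β ≃ γ) × (α ≃ β) => ((fg.2, fg.2.trans fg.1) : (α ≃ β) × (α ≃ γ)))
      (fun fg : (α ≃ β) × (α ≃ γ) => ((fg.1.symm.trans fg.2, fg.1) : (β ≃ γ) × (α ≃ β)))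
      {fg : (α ≃ β) × (α ≃ γ) | IsSemiPrepicture p1 p2 q1 q2 fg.1 ∧
        IsSemiPrepicture (fun i j => q1 (fg.1 i) (fg.1 j)) p2 r1 r2 fg.2}
      {fg : (β ≃ γ) × (α ≃ β) | IsSemiPrepicture q1 q2 r1 r2 fg.1 ∧
        IsSemiPrepicture p1 p2 (fun i j => r1 (fg.1 i) (fg.1 j)) q2 fg.2} := by
    constructor
    · rintro ⟨f, g⟩ _
      exact Prod.ext rfl (Equiv.ext fun x => by simp)
    · rintro ⟨f', g'⟩ _
      exact Prod.ext (Equiv.ext fun x => by simp) rfl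
  exact ⟨hinv.bijOn hmt hmt', hinv⟩
end

section
/- If u, v are packed words of length n, then a permutation σ ∈ S_n is a semi-picture in I(P_u, P_v) if and only if u is a permutation and σ = u; in particular if u is not injective then I(P_u, P_v) ∩ S_n (viewing semi-pictures as permutations of [n]) is empty. -/
/-- For packed words `u, v` of length `n`, a permutation `σ` is a semi-picture in
`I(P_u, P_v)` iff `u` is a permutation and `σ = u`. In particular, if `u` is not
injective then `I(P_u, P_v)` contains no permutation. -/
theorem stmt18 {n ku kv : ℕ} (u v : Fin n → ℕ)
    (hu : Set.range u = Set.Iio ku) (hv : Set.range v = Set.Iio kv)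
    (σ : Equiv.Perm (Fin n)) :
    IsSemiPicture (fun i j => u i ≤ u j) (fun i j : Fin n => i ≤ j)
        (fun i j => v i ≤ v j) (fun i j : Fin n => i ≤ j) σ
      ↔ (Function.Injective u ∧ ∀ i, (σ i : ℕ) = u i) := by
  constructor
  · rintro ⟨h1, h2⟩
    have hinj : Function.Injective u := by
      intro i j hij
      exact σ.injective (le_antisymm (h1 i j hij.le) (h1 j i hij.ge))
    refine ⟨hinj, fun i => ?_⟩
    have hlt : ∀ i j, u i < u j → σ i < σ j := by
      intro i j h
      have := h2 i j ⟨h.le, not_le.2 h⟩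
      exact lt_iff_le_not_ge.2 this
    have hiff : ∀ i j, u i < u j ↔ σ i < σ j := by
      intro i j
      refine ⟨hlt i j, fun h => ?_⟩
      by_contra hn
      exact absurd (σ.injective (le_antisymm (h1 j i (not_lt.1 hn)) h.le) ▸ h) (lt_irrefl _)
    have hki : u i < ku := by
      have : u i ∈ Set.range u := ⟨i, rfl⟩
      rwa [hu] at this
    have c1 : (Finset.univ.filter (fun j => σ j < σ i)).card = (σ i : ℕ) := by
      rw [← Fin.card_Iio (σ i)]
      apply Finset.card_bij (fun j _ => σ j)
      · intro a ha; simpa using (Finset.mem_filter.1 ha).2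
      · intro a _ b _ h; exact σ.injective h
      · intro b hb
        exact ⟨σ.symm b, by simpa using Finset.mem_Iio.1 hb, by simp⟩
    have c2 : (Finset.univ.filter (fun j => u j < u i)).card = u i := by
      rw [← Nat.card_Iio (u i)]
      apply Finset.card_bij (fun j _ => u j)
      · intro a ha; simpa using (Finset.mem_filter.1 ha).2
      · intro a _ b _ h; exact hinj h
      · intro b hb
        have hb' : b < u i := Finset.mem_Iio.1 hb
        have : b ∈ Set.range u := by rw [hu]; exact lt_trans hb' hki
        obtain ⟨j, hj⟩ := this
        exact ⟨j, by simp [hj, hb'], hj⟩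
    rw [← c1, ← c2]
    congr 1
    ext j
    simp [hiff]
  · rintro ⟨hinj, heq⟩
    constructor
    · intro i j h
      show σ i ≤ σ j
      rw [Fin.le_def, heq, heq]; exact h
    · rintro i j ⟨h, hn⟩
      refine ⟨?_, ?_⟩
      · show σ i ≤ σ j
        rw [Fin.le_def, heq, heq]; exact h
      · show ¬ σ j ≤ σ i
        rw [Fin.le_def, heq, heq]; exact hn
end
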